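/- arXiv:2512.24640 — 2 statements merged into one kernel-verified Lean document; each statement's English description precedes it below -/
import Mathlib

section
/- Let n ∈ ℕ, λ > 0, L ≥ 0, M_F > 0, M_ℓ > 0, M_V > 0, T̄ > 0, C_T > 0 and C_V > 0. Then there exists C > 0, depending only on these constants, with the following property. Let U and V be measurable spaces, u : [0,∞) → U and v : [0,∞) → V Lebesgue-measurable controls, ℓ : ℝ^{n+1} × U × V → ℝ with |ℓ| ≤ M_ℓ and |ℓ(w,a,b) − ℓ(w',a,b)| ≤ L‖w − w'‖ for all w, w', a, b, and V̂ : ℝ^{n+1} → ℝ with |V̂| ≤ M_V and |V̂(w) − V̂(w')| ≤ C_V‖w − w'‖ for all w, w'. Let z, z' ∈ ℝ^{n+1} and let Z, Z' : [0,∞) → ℝ^{n+1} be trajectories with Z_0 = z and Z'_0 = z' such that t ↦ ℓ(Z_t,u(t),v(t)) and t ↦ ℓ(Z'_t,u(t),v(t)) are Lebesgue measurable, ‖Z_t − Z'_t‖ ≤ e^{Lt}‖z − z'‖ for all t ≥ 0, and ‖Z_t − Z_s‖ ≤ M_F|t − s| and ‖Z'_t − Z'_s‖ ≤ M_F|t −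 s| for all s, t ≥ 0. Let T, T' ∈ [0, T̄] with |T − T'| ≤ C_T‖z − z'‖. Then |(∫₀^T e^{−λt} ℓ(Z_t,u(t),v(t)) dt + e^{−λT} V̂(Z_T)) − (∫₀^{T'} e^{−λt} ℓ(Z'_t,u(t),v(t)) dt + e^{−λT'} V̂(Z'_{T'}))| ≤ C‖z − z'‖. -/
/-!
Split the difference into the running costs on the common horizon `[0, T]`, the running cost
between `T'` and `T`, and the terminal terms. With `E = exp (L * Tbar)`, the first is at most
`L * E * ‖z - z'‖ * Tbar`, the second at most `Ml * |T - T'|`, and the terminal terms differ by at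
most `lam * MV * |T - T'| + CV * ‖Z T - Z' T'‖`, where
`‖Z T - Z' T'‖ ≤ E * ‖z - z'‖ + MF * |T - T'|`. Finally `|T - T'| ≤ CT * ‖z - z'‖`.
-/

open MeasureTheory Set

noncomputable section

abbrev Euc (n : ℕ) : Type := EuclideanSpace ℝ (Fin (n + 1))

open scoped Interval

lemma abs_exp_neg_mul_mul_le {lam t x M : ℝ} (hlam : 0 ≤ lam) (ht : 0 ≤ t) (hx : |x| ≤ M) :
    |Real.exp (-lam * t) * x| ≤ M := by
  have he : Real.exp (-lam * t) ≤ 1 := Real.exp_le_one_iff.2 (by nlinarith)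
  rw [abs_mul, Real.abs_exp]
  calc Real.exp (-lam * t) * |x| ≤ 1 * |x| := by gcongr
    _ ≤ M := by rwa [one_mul]

lemma abs_exp_neg_mul_sub_exp_neg_mul_le {lam a b : ℝ} (hlam : 0 ≤ lam) (ha : 0 ≤ a)
    (hb : 0 ≤ b) : |Real.exp (-lam * a) - Real.exp (-lam * b)| ≤ lam * |a - b| := by
  wlog hba : b ≤ a generalizing a b
  · rw [abs_sub_comm, abs_sub_comm a b]
    exact this hb ha (le_of_not_ge hba)
  have hsplit : Real.exp (-lam * b) - Real.exp (-lam * a) =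
      Real.exp (-lam * b) * (1 - Real.exp (-lam * (a - b))) := by
    rw [mul_sub, mul_one, ← Real.exp_add]
    ring_nf
  have hgap : |1 - Real.exp (-lam * (a - b))| ≤ lam * (a - b) := by
    have hle : Real.exp (-lam * (a - b)) ≤ 1 := Real.exp_le_one_iff.2 (by nlinarith)
    rw [abs_of_nonneg (by linarith)]
    linarith [Real.add_one_le_exp (-lam * (a - b))]
  rw [abs_sub_comm, hsplit, abs_of_nonneg (sub_nonneg.2 hba)]
  exact abs_exp_neg_mul_mul_le hlam hb hgap

lemma abs_exp_neg_mul_mul_sub_le {lam T T' p q MV K : ℝ} (hlam : 0 ≤ lam) (hT : 0 ≤ T)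
    (hT' : 0 ≤ T') (hp : |p| ≤ MV) (hpq : |p - q| ≤ K) :
    |Real.exp (-lam * T) * p - Real.exp (-lam * T') * q| ≤ lam * MV * |T - T'| + K := by
  have hsplit : Real.exp (-lam * T) * p - Real.exp (-lam * T') * q =
      (Real.exp (-lam * T) - Real.exp (-lam * T')) * p + Real.exp (-lam * T') * (p - q) := by
    ring
  have hfirst : |(Real.exp (-lam * T) - Real.exp (-lam * T')) * p| ≤ lam * MV * |T - T'| := by
    rw [abs_mul, mul_right_comm]
    gcongr
    exact abs_exp_neg_mul_sub_exp_neg_mul_le hlam hT hT'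
  rw [hsplit]
  exact (abs_add_le _ _).trans (add_le_add hfirst (abs_exp_neg_mul_mul_le hlam hT' hpq))

lemma intervalIntegrable_of_norm_le {E : Type*} [NormedAddCommGroup E] {μ : Measure ℝ}
    [IsLocallyFiniteMeasure μ] {f : ℝ → E} {a b M : ℝ} (hf : AEStronglyMeasurable f μ)
    (hM : ∀ t ∈ Ι a b, ‖f t‖ ≤ M) : IntervalIntegrable f μ a b :=
  IntervalIntegrable.mono_fun' intervalIntegrable_const hf.restrict <|
    (ae_restrict_iff' measurableSet_uIoc).2 (Filter.Eventually.of_forall hM)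

lemma abs_intervalIntegral_sub_le {f g : ℝ → ℝ} {a b b' K M : ℝ}
    (hf : IntervalIntegrable f volume a b) (hg : IntervalIntegrable g volume a b)
    (hg' : IntervalIntegrable g volume a b') (hfg : ∀ t ∈ Ι a b, |f t - g t| ≤ K)
    (hgM : ∀ t ∈ Ι b' b, |g t| ≤ M) :
    |(∫ t in a..b, f t) - ∫ t in a..b', g t| ≤ K * |b - a| + M * |b - b'| := by
  have hsplit : (∫ t in a..b, f t) - ∫ t in a..b', g t =
      (∫ t in a..b, f t - g t) + ∫ t in b'..b, g t := by
    rw [intervalIntegral.integral_sub hf hg,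
      ← intervalIntegral.integral_interval_sub_left hg hg']
    ring
  rw [hsplit]
  refine (abs_add_le _ _).trans (add_le_add ?_ ?_)
  · exact intervalIntegral.norm_integral_le_of_norm_le_const (f := fun t => f t - g t) hfg
  · exact intervalIntegral.norm_integral_le_of_norm_le_const (f := g) hgM

lemma abs_integral_discounted_sub_le {lam M K Tbar T T' : ℝ} {c c' : ℝ → ℝ} (hlam : 0 ≤ lam)
    (hc : Measurable c) (hc' : Measurable c') (hc_bdd : ∀ t, |c t| ≤ M) (hc'_bdd : ∀ t, |c' t| ≤ M)
    (hcc' : ∀ t ∈ Icc 0 Tbar, |c t - c' t| ≤ K) (hT : T ∈ Icc 0 Tbar) (hT' : T' ∈ Icc 0 Tbar) :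
    |(∫ t in (0 : ℝ)..T, Real.exp (-lam * t) * c t) -
        ∫ t in (0 : ℝ)..T', Real.exp (-lam * t) * c' t| ≤ K * Tbar + M * |T - T'| := by
  have hsub : ∀ {a b}, a ∈ Icc 0 Tbar → b ∈ Icc 0 Tbar → Ι a b ⊆ Icc 0 Tbar :=
    fun ha hb => uIoc_subset_uIcc.trans (uIcc_subset_Icc ha hb)
  have h0 : (0 : ℝ) ∈ Icc 0 Tbar := ⟨le_rfl, hT.1.trans hT.2⟩
  have hdisc_bdd : ∀ {d : ℝ → ℝ}, (∀ t, |d t| ≤ M) →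
      ∀ t ∈ Icc 0 Tbar, |Real.exp (-lam * t) * d t| ≤ M :=
    fun hd t ht => abs_exp_neg_mul_mul_le hlam ht.1 (hd t)
  have hint : ∀ {d : ℝ → ℝ} {b}, Measurable d → (∀ t, |d t| ≤ M) → b ∈ Icc 0 Tbar →
      IntervalIntegrable (fun t => Real.exp (-lam * t) * d t) volume 0 b :=
    fun hd hd_bdd hb => intervalIntegrable_of_norm_le
      ((measurable_const.mul measurable_id).exp.mul hd).aestronglyMeasurable
      fun t ht => hdisc_bdd hd_bdd t (hsub h0 hb ht)
  have hbound := abs_intervalIntegral_sub_le (hint hc hc_bdd hT) (hint hc' hc'_bdd hT)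
    (hint hc' hc'_bdd hT') (K := K) (M := M)
    (fun t ht => by
      rw [← mul_sub]
      exact abs_exp_neg_mul_mul_le hlam (hsub h0 hT ht).1 (hcc' t (hsub h0 hT ht)))
    (fun t ht => hdisc_bdd hc'_bdd t (hsub hT' hT ht))
  have hK : 0 ≤ K := (abs_nonneg _).trans (hcc' 0 h0)
  calc _ ≤ K * |T - 0| + M * |T - T'| := hbound
    _ ≤ K * Tbar + M * |T - T'| := by
      rw [sub_zero, abs_of_nonneg hT.1]
      gcongr
      exact hT.2

/-- Lipschitz continuity in the initial state of the auxiliary cost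
consisting of a running cost up to a stopping time and a terminal value. -/
theorem auxiliary_cost_lipschitz_continuity
    (n : ℕ) (lam L MF Ml MV Tbar CT CV : ℝ)
    (hlam : 0 < lam) (hL : 0 ≤ L) (hMF : 0 < MF) (hMl : 0 < Ml) (hMV : 0 < MV)
    (hTbar : 0 < Tbar) (hCT : 0 < CT) (hCV : 0 < CV) :
    ∃ C : ℝ, 0 < C ∧
      ∀ (U V : Type) [MeasurableSpace U] [MeasurableSpace V]
        (u : ℝ → U) (v : ℝ → V), Measurable u → Measurable v →
        ∀ l : Euc n → U → V → ℝ,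
          (∀ w a b, |l w a b| ≤ Ml) →
          (∀ w w' a b, |l w a b - l w' a b| ≤ L * ‖w - w'‖) →
        ∀ Vh : Euc n → ℝ,
          (∀ w, |Vh w| ≤ MV) →
          (∀ w w', |Vh w - Vh w'| ≤ CV * ‖w - w'‖) →
        ∀ (z z' : Euc n) (Z Z' : ℝ → Euc n), Z 0 = z → Z' 0 = z' →
          Measurable (fun t => l (Z t) (u t) (v t)) →
          Measurable (fun t => l (Z' t) (u t) (v t)) →
          (∀ t : ℝ, 0 ≤ t → ‖Z t - Z' t‖ ≤ Real.exp (L * t) * ‖z - z'‖) →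
          (∀ s t : ℝ, 0 ≤ s → 0 ≤ t → ‖Z t - Z s‖ ≤ MF * |t - s|) →
          (∀ s t : ℝ, 0 ≤ s → 0 ≤ t → ‖Z' t - Z' s‖ ≤ MF * |t - s|) →
        ∀ T T' : ℝ, T ∈ Icc (0 : ℝ) Tbar → T' ∈ Icc (0 : ℝ) Tbar →
          |T - T'| ≤ CT * ‖z - z'‖ →
          |((∫ t in (0 : ℝ)..T, Real.exp (-lam * t) * l (Z t) (u t) (v t)) +
                Real.exp (-lam * T) * Vh (Z T)) -
              ((∫ t in (0 : ℝ)..T', Real.exp (-lam * t) * l (Z' t) (u t) (v t)) +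
                Real.exp (-lam * T') * Vh (Z' T'))| ≤
            C * ‖z - z'‖ := by
  set E := Real.exp (L * Tbar)
  refine ⟨L * E * Tbar + Ml * CT + lam * MV * CT + CV * (E + MF * CT), by positivity, ?_⟩
  intro U V _ _ u v _ _ l hl_bdd hl_lip Vh hV_bdd hV_lip z z' Z Z' _ _ hlZ hlZ' hZZ' _ hZ'_lip
    T T' hT hT' hTT'
  have hdev : ∀ t ∈ Icc 0 Tbar, ‖Z t - Z' t‖ ≤ E * ‖z - z'‖ := fun t ht =>
    (hZZ' t ht.1).trans <| by
      gcongr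
      exact Real.exp_le_exp.2 (mul_le_mul_of_nonneg_left ht.2 hL)
  have hrun := abs_integral_discounted_sub_le hlam.le hlZ hlZ' (fun t => hl_bdd _ _ _)
    (fun t => hl_bdd _ _ _)
    (fun t ht => (hl_lip _ _ _ _).trans (mul_le_mul_of_nonneg_left (hdev t ht) hL)) hT hT'
  have hterm := abs_exp_neg_mul_mul_sub_le hlam.le hT.1 hT'.1 (hV_bdd (Z T)) (hV_lip (Z T) (Z' T'))
  have hend : ‖Z T - Z' T'‖ ≤ E * ‖z - z'‖ + MF * (CT * ‖z - z'‖) :=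
    (norm_sub_le_norm_sub_add_norm_sub _ (Z' T) _).trans <| add_le_add (hdev T hT) <|
      (hZ'_lip T' T hT'.1 hT.1).trans (by gcongr)
  rw [add_sub_add_comm]
  calc _ ≤ _ := (abs_add_le _ _).trans (add_le_add hrun hterm)
    _ ≤ L * (E * ‖z - z'‖) * Tbar + Ml * (CT * ‖z - z'‖) +
        (lam * MV * (CT * ‖z - z'‖) + CV * (E * ‖z - z'‖ + MF * (CT * ‖z - z'‖))) := by
      gcongr
    _ = _ := by ring
end
end

section
/- Let n ∈ ℕ, let Z be a nonempty compact subset of ℝ^{n+1}, μ₀ a Borel probability measure on Z, W₁, W₂ : C(Z,Z) → ℝ, and ε > 0. Define W_ε : C(Z,Z) × C(Z,Z) → ℝ by W_ε(Φ₁,Φ₂) := W₂(Φ₂) − W₁(Φ₁) + (1/ε)‖Φ₁ − Φ₂‖²_{L²_{μ₀}}. Suppose (Φ̄₁, Φ̄₂) ∈ C(Z,Z) × C(Z,Z) satisfies W_ε(Φ̄₁,Φ̄₂) ≤ W_ε(Φ₁,Φ₂) + ε(‖Φ₁ − Φ̄₁‖_∞ + ‖Φ₂ − Φ̄₂‖_∞)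 for all (Φ₁,Φ₂) ∈ C(Z,Z) × C(Z,Z). Then (2/ε)(Φ̄₁ − Φ̄₂) ∈ D⁺_ε W₁(Φ̄₁) and (2/ε)(Φ̄₁ − Φ̄₂) ∈ D⁻_ε W₂(Φ̄₂). -/
open MeasureTheory Set

noncomputable section

/-- The sup norm `‖Ψ‖_∞ = sup_{z ∈ Z} ‖Ψ z‖` of a continuous map `Ψ : Z → ℝ^{n+1}`. -/
def supN {n : ℕ} {Zs : Set (Euc n)} (Ψ : C(↥Zs, Euc n)) : ℝ := ⨆ z : ↥Zs, ‖Ψ z‖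

/-- The uniform distance `‖Φ - Ψ‖_∞` between two elements of `C(Z,Z)`. -/
def supDist {n : ℕ} {Zs : Set (Euc n)} (Φ Ψ : C(↥Zs, ↥Zs)) : ℝ :=
  ⨆ z : ↥Zs, ‖(Φ z : Euc n) - (Ψ z : Euc n)‖

/-- The inclusion of `C(Z,Z)` into `C(Z,ℝ^{n+1})`. -/
def toE {n : ℕ} {Zs : Set (Euc n)} (Φ : C(↥Zs, ↥Zs)) : C(↥Zs, Euc n) :=
  ⟨fun z => (Φ z : Euc n), continuous_subtype_val.comp Φ.continuous⟩

/-- The map `Φ + Ψ`, as an element of `C(Z,Z)`, given that it maps into `Z`. -/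
def addIn {n : ℕ} {Zs : Set (Euc n)} (Φ : C(↥Zs, ↥Zs)) (Ψ : C(↥Zs, Euc n))
    (h : ∀ z : ↥Zs, ((Φ z : Euc n) + Ψ z) ∈ Zs) : C(↥Zs, ↥Zs) :=
  ⟨fun z => ⟨(Φ z : Euc n) + Ψ z, h z⟩,
    Continuous.subtype_mk ((continuous_subtype_val.comp Φ.continuous).add Ψ.continuous) _⟩

/-- `p` belongs to the `δ`-superdifferential `D⁺_δ w(Φ₀)`. -/
def memSuperDiff {n : ℕ} {Zs : Set (Euc n)} (μ₀ : Measure ↥Zs) (δ : ℝ)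
    (w : C(↥Zs, ↥Zs) → ℝ) (Φ₀ : C(↥Zs, ↥Zs)) (p : C(↥Zs, Euc n)) : Prop :=
  ∀ ε : ℝ, 0 < ε → ∃ r : ℝ, 0 < r ∧
    ∀ (Ψ : C(↥Zs, Euc n)) (h : ∀ z : ↥Zs, ((Φ₀ z : Euc n) + Ψ z) ∈ Zs),
      0 < supN Ψ → supN Ψ ≤ r →
      w (addIn Φ₀ Ψ h) - w Φ₀ - ∫ z, (inner ℝ (Ψ z) (p z) : ℝ) ∂μ₀ ≤ (δ + ε) * supN Ψ

/-- `p` belongs to the `δ`-subdifferential `D⁻_δ w(Φ₀)`. -/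
def memSubDiff {n : ℕ} {Zs : Set (Euc n)} (μ₀ : Measure ↥Zs) (δ : ℝ)
    (w : C(↥Zs, ↥Zs) → ℝ) (Φ₀ : C(↥Zs, ↥Zs)) (p : C(↥Zs, Euc n)) : Prop :=
  ∀ ε : ℝ, 0 < ε → ∃ r : ℝ, 0 < r ∧
    ∀ (Ψ : C(↥Zs, Euc n)) (h : ∀ z : ↥Zs, ((Φ₀ z : Euc n) + Ψ z) ∈ Zs),
      0 < supN Ψ → supN Ψ ≤ r →
      -((δ + ε) * supN Ψ) ≤ w (addIn Φ₀ Ψ h) - w Φ₀ - ∫ z, (inner ℝ (Ψ z) (p z) : ℝ) ∂μ₀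

/-!
Perturb only the first component of the Ekeland point: with `Φ₁ = Φ̄₁ + Ψ` and `Φ₂ = Φ̄₂`, the
Ekeland inequality bounds `W₁(Φ̄₁ + Ψ) - W₁(Φ̄₁)` by the increment of the penalty,
`(2/ε) ∫ Ψ · (Φ̄₁ - Φ̄₂) dμ₀ + ‖Ψ‖²_{L²} / ε`, plus `ε ‖Ψ‖_∞`. On a probability space
`‖Ψ‖²_{L²} ≤ ‖Ψ‖²_∞ = o(‖Ψ‖_∞)`, which gives the superdifferential. The point `(Φ̄₂, Φ̄₁)` is an
Ekeland point of the same functional written with `-W₂, -W₁` in place of `W₁, W₂`, so the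
subdifferential of `W₂` is the superdifferential of `-W₂`.
-/

section IntegralEstimates

variable {X E : Type*} [MeasurableSpace X] {μ : Measure X}
  [NormedAddCommGroup E]

theorem integral_norm_add_sq [TopologicalSpace X] [CompactSpace X] [OpensMeasurableSpace X]
    [IsFiniteMeasure μ] [InnerProductSpace ℝ E] {f g : X → E} (hf : Continuous f)
    (hg : Continuous g) :
    ∫ x, ‖f x + g x‖ ^ 2 ∂μ =
      ∫ x, ‖f x‖ ^ 2 ∂μ + 2 * ∫ x, inner ℝ (f x) (g x) ∂μ + ∫ x, ‖g x‖ ^ 2 ∂μ := by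
  have integrable {u : X → ℝ} (hu : Continuous u) : Integrable u μ :=
    hu.integrable_of_hasCompactSupport (.of_compactSpace u)
  simp_rw [norm_add_sq_real]
  rw [integral_add, integral_add, integral_const_mul]
  all_goals exact integrable (by fun_prop)

theorem integral_norm_sq_le_of_norm_le [IsProbabilityMeasure μ] {g : X → E} {C : ℝ}
    (hC : ∀ x, ‖g x‖ ≤ C) : ∫ x, ‖g x‖ ^ 2 ∂μ ≤ C ^ 2 := by
  calc ∫ x, ‖g x‖ ^ 2 ∂μ ≤ ∫ _, C ^ 2 ∂μ :=
        integral_mono_of_nonneg (.of_forall fun _ => by positivity) (integrable_const _)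
          (.of_forall fun x => pow_le_pow_left₀ (norm_nonneg _) (hC x) 2)
    _ = C ^ 2 := by simp

end IntegralEstimates

section Differentials

variable {n : ℕ} {Zs : Set (Euc n)}

theorem norm_le_supN [CompactSpace Zs] (Ψ : C(Zs, Euc n)) (z : Zs) : ‖Ψ z‖ ≤ supN Ψ :=
  le_ciSup (isCompact_range Ψ.continuous.norm).bddAbove z

theorem supDist_addIn_self (Φ : C(Zs, Zs)) (Ψ : C(Zs, Euc n))
    (h : ∀ z : Zs, (Φ z : Euc n) + Ψ z ∈ Zs) : supDist (addIn Φ Ψ h) Φ = supN Ψ := by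
  simp [supDist, supN, addIn]

theorem supDist_self (Φ : C(Zs, Zs)) : supDist Φ Φ = 0 := by
  simp [supDist]

variable {μ₀ : Measure Zs} {δ : ℝ} {w : C(Zs, Zs) → ℝ} {Φ₀ : C(Zs, Zs)} {p : C(Zs, Euc n)}

theorem memSuperDiff_of_le_quadratic {C : ℝ} (hC : 0 < C)
    (hw : ∀ (Ψ : C(Zs, Euc n)) (h : ∀ z : Zs, (Φ₀ z : Euc n) + Ψ z ∈ Zs),
      w (addIn Φ₀ Ψ h) - w Φ₀ - ∫ z, inner ℝ (Ψ z) (p z) ∂μ₀ ≤ δ * supN Ψ + C * supN Ψ ^ 2) :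
    memSuperDiff μ₀ δ w Φ₀ p := by
  intro e he
  refine ⟨e / C, by positivity, fun Ψ h hpos hle => ?_⟩
  have hquad : C * supN Ψ ^ 2 ≤ e * supN Ψ :=
    calc C * supN Ψ ^ 2 = C * supN Ψ * supN Ψ := by ring
      _ ≤ C * (e / C) * supN Ψ := by gcongr
      _ = e * supN Ψ := by field_simp
  linarith [hw Ψ h]

theorem memSubDiff_iff_memSuperDiff_neg :
    memSubDiff μ₀ δ w Φ₀ p ↔ memSuperDiff μ₀ δ (fun Φ => -w Φ) Φ₀ (-p) := by
  simp only [memSubDiff, memSuperDiff, ContinuousMap.neg_apply, inner_neg_right, integral_neg]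
  refine forall₂_congr fun _ _ => exists_congr fun _ => and_congr_right fun _ =>
    forall₂_congr fun _ _ => imp_congr_right fun _ => imp_congr_right fun _ => ?_
  constructor <;> intro <;> linarith

end Differentials

/-- `(Φb₁, Φb₂)` is a point given by Ekeland's principle, with slope `δ`, for the doubled functional
`W_ε(Φ₁, Φ₂) = W₂ Φ₂ - W₁ Φ₁ + ‖Φ₁ - Φ₂‖²_{L²(μ₀)} / ε`. -/
def IsEkelandPoint {n : ℕ} {Zs : Set (Euc n)} (μ₀ : Measure Zs) (W₁ W₂ : C(Zs, Zs) → ℝ)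
    (ε δ : ℝ) (Φb₁ Φb₂ : C(Zs, Zs)) : Prop :=
  ∀ Φ₁ Φ₂ : C(Zs, Zs),
    W₂ Φb₂ - W₁ Φb₁ + (1 / ε) * ∫ z, ‖(Φb₁ z : Euc n) - (Φb₂ z : Euc n)‖ ^ 2 ∂μ₀ ≤
      W₂ Φ₂ - W₁ Φ₁ + (1 / ε) * (∫ z, ‖(Φ₁ z : Euc n) - (Φ₂ z : Euc n)‖ ^ 2 ∂μ₀) +
        δ * (supDist Φ₁ Φb₁ + supDist Φ₂ Φb₂)

namespace IsEkelandPoint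

variable {n : ℕ} {Zs : Set (Euc n)} {μ₀ : Measure Zs} {W₁ W₂ : C(Zs, Zs) → ℝ} {ε δ : ℝ}
  {Φb₁ Φb₂ : C(Zs, Zs)}

theorem swap (hek : IsEkelandPoint μ₀ W₁ W₂ ε δ Φb₁ Φb₂) :
    IsEkelandPoint μ₀ (fun Φ => -W₂ Φ) (fun Φ => -W₁ Φ) ε δ Φb₂ Φb₁ := by
  intro Φ₁ Φ₂
  have h := hek Φ₂ Φ₁
  simp_rw [norm_sub_rev (Φb₂ _ : Euc n), norm_sub_rev (Φ₁ _ : Euc n)]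
  linarith

theorem sub_sub_integral_le [CompactSpace Zs] [IsProbabilityMeasure μ₀]
    (hek : IsEkelandPoint μ₀ W₁ W₂ ε δ Φb₁ Φb₂) (hε : 0 < ε) (Ψ : C(Zs, Euc n))
    (h : ∀ z : Zs, (Φb₁ z : Euc n) + Ψ z ∈ Zs) :
    W₁ (addIn Φb₁ Ψ h) - W₁ Φb₁ - ∫ z, inner ℝ (Ψ z) (((2 / ε) • (toE Φb₁ - toE Φb₂)) z) ∂μ₀ ≤
      δ * supN Ψ + 1 / ε * supN Ψ ^ 2 := by
  set A := toE Φb₁ - toE Φb₂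
  have hexpand : ∫ z, ‖(addIn Φb₁ Ψ h z : Euc n) - (Φb₂ z : Euc n)‖ ^ 2 ∂μ₀ =
      ∫ z, ‖(Φb₁ z : Euc n) - (Φb₂ z : Euc n)‖ ^ 2 ∂μ₀ + 2 * ∫ z, inner ℝ (A z) (Ψ z) ∂μ₀ +
        ∫ z, ‖Ψ z‖ ^ 2 ∂μ₀ := by
    convert integral_norm_add_sq (μ := μ₀) A.continuous Ψ.continuous using 3 with z
    · congr 2
      simp only [addIn, A, toE, ContinuousMap.coe_mk, ContinuousMap.sub_apply]
      abel
    · rfl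
  have hinner :
      ∫ z, inner ℝ (Ψ z) (((2 / ε) • A) z) ∂μ₀ = 2 / ε * ∫ z, inner ℝ (A z) (Ψ z) ∂μ₀ := by
    simp only [ContinuousMap.smul_apply, real_inner_smul_right, real_inner_comm (A _),
      integral_const_mul]
  have hsq : 1 / ε * ∫ z, ‖Ψ z‖ ^ 2 ∂μ₀ ≤ 1 / ε * supN Ψ ^ 2 := by
    gcongr
    exact integral_norm_sq_le_of_norm_le (norm_le_supN Ψ)
  have hmin := hek (addIn Φb₁ Ψ h) Φb₂
  rw [hexpand, supDist_addIn_self, supDist_self] at hmin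
  rw [hinner]
  linear_combination hmin + hsq

theorem memSuperDiff [CompactSpace Zs] [IsProbabilityMeasure μ₀]
    (hek : IsEkelandPoint μ₀ W₁ W₂ ε δ Φb₁ Φb₂) (hε : 0 < ε) :
    memSuperDiff μ₀ δ W₁ Φb₁ ((2 / ε) • (toE Φb₁ - toE Φb₂)) :=
  memSuperDiff_of_le_quadratic (one_div_pos.2 hε) (hek.sub_sub_integral_le hε)

theorem memSubDiff [CompactSpace Zs] [IsProbabilityMeasure μ₀]
    (hek : IsEkelandPoint μ₀ W₁ W₂ ε δ Φb₁ Φb₂) (hε : 0 < ε) :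
    memSubDiff μ₀ δ W₂ Φb₂ ((2 / ε) • (toE Φb₁ - toE Φb₂)) := by
  rw [memSubDiff_iff_memSuperDiff_neg]
  convert hek.swap.memSuperDiff hε using 1
  rw [smul_sub, smul_sub, neg_sub]

end IsEkelandPoint

theorem ekeland_point_gives_differentials_general
    (n : ℕ) (Zs : Set (Euc n)) (hZc : IsCompact Zs)
    (μ₀ : Measure ↥Zs) [IsProbabilityMeasure μ₀]
    (W₁ W₂ : C(↥Zs, ↥Zs) → ℝ) (ε : ℝ) (hε : 0 < ε)
    (Φb₁ Φb₂ : C(↥Zs, ↥Zs))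
    (hek : ∀ Φ₁ Φ₂ : C(↥Zs, ↥Zs),
      W₂ Φb₂ - W₁ Φb₁ + (1 / ε) * ∫ z, ‖(Φb₁ z : Euc n) - (Φb₂ z : Euc n)‖ ^ 2 ∂μ₀ ≤
        W₂ Φ₂ - W₁ Φ₁ + (1 / ε) * (∫ z, ‖(Φ₁ z : Euc n) - (Φ₂ z : Euc n)‖ ^ 2 ∂μ₀) +
          ε * (supDist Φ₁ Φb₁ + supDist Φ₂ Φb₂)) :
    memSuperDiff μ₀ ε W₁ Φb₁ ((2 / ε) • (toE Φb₁ - toE Φb₂)) ∧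
      memSubDiff μ₀ ε W₂ Φb₂ ((2 / ε) • (toE Φb₁ - toE Φb₂)) := by
  have : CompactSpace Zs := isCompact_iff_compactSpace.mp hZc
  have hek : IsEkelandPoint μ₀ W₁ W₂ ε ε Φb₁ Φb₂ := hek
  exact ⟨hek.memSuperDiff hε, hek.memSubDiff hε⟩

/-- The Ekeland point of the doubled functional `W_ε` yields an element of the
`ε`-superdifferential of `W₁` at `Φ̄₁` and of the `ε`-subdifferential of `W₂` at `Φ̄₂`. -/
theorem ekeland_point_gives_differentials
    (n : ℕ) (Zs : Set (Euc n)) (hZc : IsCompact Zs) (hZn : Zs.Nonempty)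
    (μ₀ : Measure ↥Zs) [IsProbabilityMeasure μ₀]
    (W₁ W₂ : C(↥Zs, ↥Zs) → ℝ) (ε : ℝ) (hε : 0 < ε)
    (Φb₁ Φb₂ : C(↥Zs, ↥Zs))
    (hek : ∀ Φ₁ Φ₂ : C(↥Zs, ↥Zs),
      W₂ Φb₂ - W₁ Φb₁ + (1 / ε) * ∫ z, ‖(Φb₁ z : Euc n) - (Φb₂ z : Euc n)‖ ^ 2 ∂μ₀ ≤
        W₂ Φ₂ - W₁ Φ₁ + (1 / ε) * (∫ z, ‖(Φ₁ z : Euc n) - (Φ₂ z : Euc n)‖ ^ 2 ∂μ₀) +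
          ε * (supDist Φ₁ Φb₁ + supDist Φ₂ Φb₂)) :
    memSuperDiff μ₀ ε W₁ Φb₁ ((2 / ε) • (toE Φb₁ - toE Φb₂)) ∧
      memSubDiff μ₀ ε W₂ Φb₂ ((2 / ε) • (toE Φb₁ - toE Φb₂)) :=
  ekeland_point_gives_differentials_general n Zs hZc μ₀ W₁ W₂ ε hε Φb₁ Φb₂ hek
end
end
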